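/- For every k ≥ 1 and every y ∈ [0, 1/3], the optimal threshold function satisfies g_k(y) ≤ 1/3. -/
import Mathlib


open MeasureTheory Set Filter

/-- The value functions of the optimal online alternating-subsequence selection
problem: `v 0 y = 0` and
`v (k+1) y = y * v k y + ∫ x in y..1, max (v k y) (1 + v k (1 - x))`. -/
noncomputable def v : ℕ → ℝ → ℝ
  | 0, _ => 0
  | (k+1), y => y * v k y + ∫ x in y..(1:ℝ), max (v k y) (1 + v k (1 - x))

/-- The optimal threshold function:
`g k y = inf {x ∈ [y,1] : v (k-1) y ≤ 1 + v (k-1) (1-x)}`. -/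
noncomputable def g (k : ℕ) (y : ℝ) : ℝ :=
  sInf {x : ℝ | x ∈ Set.Icc y 1 ∧ v (k-1) y ≤ 1 + v (k-1) (1 - x)}

/-- The minimal fixed point `ξ k = inf {y ∈ [0,1] : g k y = y}`. -/
noncomputable def xi (k : ℕ) : ℝ :=
  sInf {y : ℝ | y ∈ Set.Icc (0:ℝ) 1 ∧ g k y = y}

lemma v_succ (k : ℕ) (y : ℝ) :
    v (k+1) y = y * v k y + ∫ x in y..(1:ℝ), max (v k y) (1 + v k (1 - x)) := rfl

lemma v_nonneg : ∀ k : ℕ, ∀ y ∈ Set.Icc (0:ℝ) 1, 0 ≤ v k y := by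
  intro k
  induction k with
  | zero => intro y _; simp [v]
  | succ k ih =>
    intro y hy
    rw [v_succ]
    have h1 : 0 ≤ v k y := ih y hy
    have h2 : 0 ≤ ∫ x in y..(1:ℝ), max (v k y) (1 + v k (1 - x)) :=
      intervalIntegral.integral_nonneg hy.2 (fun u _ => le_trans h1 (le_max_left _ _))
    have := mul_nonneg hy.1 h1
    linarith

lemma mono_shift (k : ℕ) (hk : AntitoneOn (v k) (Set.Icc 0 1)) :
    MonotoneOn (fun x => 1 + v k (1 - x)) (Set.Icc (0:ℝ) 1) := by
  intro a ha b hb hab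
  dsimp only
  have h1 : (1:ℝ) - b ∈ Set.Icc (0:ℝ) 1 := ⟨by linarith [hb.2], by linarith [hb.1]⟩
  have h2 : (1:ℝ) - a ∈ Set.Icc (0:ℝ) 1 := ⟨by linarith [ha.2], by linarith [ha.1]⟩
  have := hk h1 h2 (by linarith)
  linarith

lemma mono_max (k : ℕ) (hk : AntitoneOn (v k) (Set.Icc 0 1)) (C : ℝ) :
    MonotoneOn (fun x => max C (1 + v k (1 - x))) (Set.Icc (0:ℝ) 1) := by
  intro a ha b hb hab
  exact max_le_max le_rfl (mono_shift k hk ha hb hab)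

lemma intgr_max (k : ℕ) (hk : AntitoneOn (v k) (Set.Icc 0 1)) (C : ℝ)
    {a b : ℝ} (ha : a ∈ Set.Icc (0:ℝ) 1) (hb : b ∈ Set.Icc (0:ℝ) 1) :
    IntervalIntegrable (fun x => max C (1 + v k (1 - x))) volume a b :=
  ((mono_max k hk C).mono (Set.uIcc_subset_Icc ha hb)).intervalIntegrable

lemma intgr_shift (k : ℕ) (hk : AntitoneOn (v k) (Set.Icc 0 1))
    {a b : ℝ} (ha : a ∈ Set.Icc (0:ℝ) 1) (hb : b ∈ Set.Icc (0:ℝ) 1) :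
    IntervalIntegrable (fun x => 1 + v k (1 - x)) volume a b :=
  ((mono_shift k hk).mono (Set.uIcc_subset_Icc ha hb)).intervalIntegrable

lemma v_anti : ∀ k : ℕ, AntitoneOn (v k) (Set.Icc (0:ℝ) 1) := by
  intro k
  induction k with
  | zero => intro a _ b _ _; simp [v]
  | succ k ih =>
    intro a ha b hb hab
    rw [v_succ, v_succ]
    have hva : v k b ≤ v k a := ih ha hb hab
    have h0a : 0 ≤ v k a := v_nonneg k a ha
    have hb1 : (1:ℝ) ∈ Set.Icc (0:ℝ) 1 := by norm_num
    have hsplit :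
        (∫ x in a..b, max (v k a) (1 + v k (1 - x))) +
          (∫ x in b..(1:ℝ), max (v k a) (1 + v k (1 - x))) =
          ∫ x in a..(1:ℝ), max (v k a) (1 + v k (1 - x)) :=
      intervalIntegral.integral_add_adjacent_intervals
        (intgr_max k ih _ ha hb) (intgr_max k ih _ hb hb1)
    have h1 : (∫ x in b..(1:ℝ), max (v k b) (1 + v k (1 - x))) ≤
        ∫ x in b..(1:ℝ), max (v k a) (1 + v k (1 - x)) :=
      intervalIntegral.integral_mono_on hb.2 (intgr_max k ih _ hb hb1)
        (intgr_max k ih _ hb hb1) (fun x _ => max_le_max hva le_rfl)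
    have h2 : (b - a) * v k a ≤ ∫ x in a..b, max (v k a) (1 + v k (1 - x)) := by
      have := intervalIntegral.integral_mono_on hab
        (intervalIntegrable_const (c := v k a)) (intgr_max k ih _ ha hb)
        (fun x _ => le_max_left _ _)
      simpa [smul_eq_mul] using this
    nlinarith [mul_le_mul_of_nonneg_left hva hb.1]

lemma v_key : ∀ k : ℕ, ∀ y ∈ Set.Icc (0:ℝ) (1/3), v k y ≤ 1 + v k (2/3) := by
  intro k
  induction k with
  | zero => intro y _; simp [v]
  | succ k ih =>
    intro y hy
    have hanti := v_anti k
    set c := v k (2/3) with hc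
    have hy1 : y ∈ Set.Icc (0:ℝ) 1 := ⟨hy.1, by linarith [hy.2]⟩
    have h13 : (1/3:ℝ) ∈ Set.Icc (0:ℝ) 1 := by norm_num
    have h23 : (2/3:ℝ) ∈ Set.Icc (0:ℝ) 1 := by norm_num
    have h11 : (1:ℝ) ∈ Set.Icc (0:ℝ) 1 := by norm_num
    have hIHy : v k y ≤ 1 + c := ih y hy
    have hIH3 : v k (1/3) ≤ 1 + c := ih (1/3) ⟨by norm_num, le_rfl⟩
    -- Step B : bound the integrand by M x = max (1+c) (1 + v k (1-x))
    have hB : (∫ x in y..(1:ℝ), max (v k y) (1 + v k (1 - x))) ≤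
        ∫ x in y..(1:ℝ), max (1 + c) (1 + v k (1 - x)) :=
      intervalIntegral.integral_mono_on hy1.2 (intgr_max k hanti _ hy1 h11)
        (intgr_max k hanti _ hy1 h11) (fun x _ => max_le_max hIHy le_rfl)
    -- Step C : split the integral
    have hC1 :
        (∫ x in y..(1/3:ℝ), max (1 + c) (1 + v k (1 - x))) +
          (∫ x in (1/3:ℝ)..(1:ℝ), max (1 + c) (1 + v k (1 - x))) =
          ∫ x in y..(1:ℝ), max (1 + c) (1 + v k (1 - x)) :=
      intervalIntegral.integral_add_adjacent_intervals
        (intgr_max k hanti _ hy1 h13) (intgr_max k hanti _ h13 h11)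
    have hC2 :
        (∫ x in (1/3:ℝ)..(2/3:ℝ), max (1 + c) (1 + v k (1 - x))) +
          (∫ x in (2/3:ℝ)..(1:ℝ), max (1 + c) (1 + v k (1 - x))) =
          ∫ x in (1/3:ℝ)..(1:ℝ), max (1 + c) (1 + v k (1 - x)) :=
      intervalIntegral.integral_add_adjacent_intervals
        (intgr_max k hanti _ h13 h23) (intgr_max k hanti _ h23 h11)
    -- Step D : on [y, 1/3], M x ≤ 1 + c
    have hD : (∫ x in y..(1/3:ℝ), max (1 + c) (1 + v k (1 - x))) ≤ (1/3 - y) * (1 + c) := by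
      have hmono := intervalIntegral.integral_mono_on hy.2
        (intgr_max k hanti _ hy1 h13) (intervalIntegrable_const (c := 1 + c))
        (fun x hx => by
          have hx1 : (1:ℝ) - x ∈ Set.Icc (0:ℝ) 1 := ⟨by linarith [hx.2], by linarith [hx.1, hy.1]⟩
          have : v k (1 - x) ≤ c := hanti h23 hx1 (by linarith [hx.2])
          show max (1 + c) (1 + v k (1 - x)) ≤ 1 + c
          exact max_le le_rfl (by linarith))
      rw [intervalIntegral.integral_const, smul_eq_mul] at hmono
      linarith
    -- Step E : on [1/3, 2/3], M x ≤ 2 + c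
    have hE : (∫ x in (1/3:ℝ)..(2/3:ℝ), max (1 + c) (1 + v k (1 - x))) ≤ (1/3) * (2 + c) := by
      have hmono := intervalIntegral.integral_mono_on (by norm_num : (1/3:ℝ) ≤ 2/3)
        (intgr_max k hanti _ h13 h23) (intervalIntegrable_const (c := 2 + c))
        (fun x hx => by
          have hx1 : (1:ℝ) - x ∈ Set.Icc (0:ℝ) 1 := ⟨by linarith [hx.2], by linarith [hx.1]⟩
          have : v k (1 - x) ≤ v k (1/3) := hanti h13 hx1 (by linarith [hx.2])
          show max (1 + c) (1 + v k (1 - x)) ≤ 2 + c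
          exact max_le (by linarith) (by linarith))
      rw [intervalIntegral.integral_const, smul_eq_mul] at hmono
      linarith
    -- Step F : on [2/3, 1], M x = 1 + v k (1-x)
    have hF : (∫ x in (2/3:ℝ)..(1:ℝ), max (1 + c) (1 + v k (1 - x))) =
        ∫ x in (2/3:ℝ)..(1:ℝ), (1 + v k (1 - x)) := by
      apply intervalIntegral.integral_congr
      intro x hx
      rw [Set.uIcc_of_le (by norm_num : (2/3:ℝ) ≤ 1)] at hx
      have hx1 : (1:ℝ) - x ∈ Set.Icc (0:ℝ) 1 := ⟨by linarith [hx.2], by linarith [hx.1]⟩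
      have : c ≤ v k (1 - x) := hanti hx1 h23 (by linarith [hx.1])
      exact max_eq_right (by linarith)
    -- Step G : lower bound for v (k+1) (2/3)
    have hG : (2/3 : ℝ) * c + (∫ x in (2/3:ℝ)..(1:ℝ), (1 + v k (1 - x))) ≤ v (k+1) (2/3) := by
      rw [v_succ]
      have hmono : (∫ x in (2/3:ℝ)..(1:ℝ), (1 + v k (1 - x))) ≤
          ∫ x in (2/3:ℝ)..(1:ℝ), max (v k (2/3)) (1 + v k (1 - x)) :=
        intervalIntegral.integral_mono_on (by norm_num) (intgr_shift k hanti h23 h11)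
          (intgr_max k hanti _ h23 h11) (fun x _ => le_max_right _ _)
      rw [← hc]
      linarith
    -- combine everything
    rw [v_succ]
    have hyc : y * v k y ≤ y * (1 + c) := mul_le_mul_of_nonneg_left hIHy hy.1
    nlinarith [hB, hC1, hC2, hD, hE, hF, hG, hyc]

/-- For every `k ≥ 1` and every `y ∈ [0, 1/3]`, one has `g k y ≤ 1/3`. -/
theorem threshold_upper_bound :
    ∀ k : ℕ, 1 ≤ k → ∀ y : ℝ, y ∈ Set.Icc (0:ℝ) (1/3) → g k y ≤ 1/3 := by
  intro k _ y hy
  have hmem : (1/3:ℝ) ∈ {x : ℝ | x ∈ Set.Icc y 1 ∧ v (k-1) y ≤ 1 + v (k-1) (1 - x)} := by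
    refine ⟨⟨hy.2, by norm_num⟩, ?_⟩
    have h : (1:ℝ) - 1/3 = 2/3 := by norm_num
    rw [h]
    exact v_key (k-1) y hy
  have hbdd : BddBelow {x : ℝ | x ∈ Set.Icc y 1 ∧ v (k-1) y ≤ 1 + v (k-1) (1 - x)} :=
    ⟨y, fun x hx => hx.1.1⟩
  exact csInf_le hbdd hmem
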